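/- In the Weyl group W of type A_{n-1} (the symmetric group S_n), a positive integer d is a regular number (i.e. some element of W has a regular eigenvector with eigenvalue a primitive d-th root of unity in the reflection representation) if and only if d divides n or d divides n−1. -/

import Mathlib

/-!
STATEMENT 5: In the Weyl group of type `A_{n-1}` (the symmetric group `S_n` acting on its
`(n−1)`-dimensional reflection representation `{v ∈ ℂⁿ : ∑ vᵢ = 0}` by permuting
coordinates), a positive integer `d` is a regular number (some element has a regular
eigenvector — one lying on no reflection hyperplane `{vᵢ = vⱼ}` — with eigenvalue
`e^{2πi/d}`) if and only if `d ∣ n` or `d ∣ n − 1`.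
-/

open Complex

/-- A permutation `σ ∈ S_n` acting on `v ∈ ℂⁿ` by `(σ • v) i = v (σ⁻¹ i)` has a regular
`e^{2πi/d}`-eigenvector in the reflection representation: a vector with coordinates summing
to `0`, pairwise distinct coordinates (i.e. lying on no reflection hyperplane), which is an
eigenvector with eigenvalue `e^{2πi/d}`. -/
def IsRegularEigenvector (n d : ℕ) (σ : Equiv.Perm (Fin n)) (v : Fin n → ℂ) : Prop :=
  (∑ i, v i = 0) ∧
  (∀ i j : Fin n, i ≠ j → v i ≠ v j) ∧
  (∀ i : Fin n, v (σ⁻¹ i) = Complex.exp (2 * Real.pi * Complex.I / d) * v i)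

/-
If `v` is a regular `ζ`-eigenvector of `σ`, then `σ⁻¹` permutes the nonzero coordinates of `v`
while multiplying each of them by `ζ`; comparing the products of these coordinates gives
`ζ ^ k = 1`, so `d ∣ k`, where `k` is their number. As the coordinates are distinct, at most one
of them vanishes, so `k = n` or `k = n - 1`.

Conversely, if `n = d * m` with `d ≥ 2`, the coordinates `ζ ^ s * (t + 1)` for `s < d`, `t < m`
are distinct (compare absolute values, then arguments), sum to zero because the `d`-th roots of
unity do, and are multiplied by `ζ` when `s` is shifted by one. For `n = d * m + 1` one adds a
fixed zero coordinate. For `d = 1` the identity works, with the `n`-th roots of unity as vector.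
-/

open Finset Function

section Necessity

variable {ι K : Type*} [Fintype ι] [DecidableEq K]

theorem card_sub_one_le_card_filter_ne_zero [Zero K] {v : ι → K} (hv : Injective v) :
    Fintype.card ι - 1 ≤ #{i | v i ≠ 0} := by
  have hzero : #{i | v i = 0} ≤ 1 := card_le_one.2 fun a ha b hb => hv (by simp_all)
  have hsplit := card_filter_add_card_filter_not (s := univ) (fun i => v i = 0)
  rw [card_univ] at hsplit
  simp only [ne_eq]
  omega

theorem pow_card_filter_ne_zero_eq_one [CommGroupWithZero K] {σ : Equiv.Perm ι} {v : ι → K}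
    {ζ : K} (hζ : ζ ≠ 0) (h : ∀ i, v (σ⁻¹ i) = ζ * v i) : ζ ^ #{i | v i ≠ 0} = 1 := by
  set s : Finset ι := {i | v i ≠ 0}
  have hperm : ∏ i ∈ s, v (σ⁻¹ i) = ∏ i ∈ s, v i :=
    prod_equiv σ⁻¹ (fun i => by simp only [s, mem_filter, mem_univ, true_and, h, ne_eq,
      mul_eq_zero, hζ, false_or]) fun _ _ => rfl
  have hne : ∏ i ∈ s, v i ≠ 0 := prod_ne_zero_iff.2 fun i hi => (mem_filter.1 hi).2
  rw [prod_congr rfl fun i _ => h i, prod_mul_distrib, prod_const] at hperm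
  exact mul_right_cancel₀ hne (hperm.trans (one_mul _).symm)

end Necessity

/-- `IsRegularEigenvector` over an arbitrary finite index type, with an arbitrary eigenvalue. -/
structure IsRegularEigenvectorOf {ι : Type*} [Fintype ι] (ζ : ℂ) (σ : Equiv.Perm ι)
    (v : ι → ℂ) : Prop where
  sum_eq_zero : ∑ i, v i = 0
  injective : Injective v
  apply_inv : ∀ i, v (σ⁻¹ i) = ζ * v i

theorem isRegularEigenvector_iff {n d : ℕ} {σ : Equiv.Perm (Fin n)} {v : Fin n → ℂ} :
    IsRegularEigenvector n d σ v ↔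
      IsRegularEigenvectorOf (exp (2 * Real.pi * I / d)) σ v :=
  ⟨fun ⟨hsum, hne, hv⟩ => ⟨hsum, fun i j hij => by_contra fun h => hne i j h hij, hv⟩,
    fun h => ⟨h.sum_eq_zero, fun _ _ => h.injective.ne, h.apply_inv⟩⟩

namespace IsRegularEigenvectorOf

variable {ι κ : Type*} [Fintype ι] [Fintype κ] {ζ : ℂ} {σ : Equiv.Perm ι} {v : ι → ℂ}

theorem dvd_card_or_dvd_card_sub_one (hv : IsRegularEigenvectorOf ζ σ v) {d : ℕ} [NeZero d]
    (hζ : IsPrimitiveRoot ζ d) : d ∣ Fintype.card ι ∨ d ∣ Fintype.card ι - 1 := by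
  have hdvd := hζ.dvd_of_pow_eq_one _
    (pow_card_filter_ne_zero_eq_one (hζ.ne_zero (NeZero.ne d)) hv.apply_inv)
  have hle := card_sub_one_le_card_filter_ne_zero hv.injective
  have hge : #{i | v i ≠ 0} ≤ Fintype.card ι := card_le_univ _
  rcases (show #{i | v i ≠ 0} = Fintype.card ι ∨ #{i | v i ≠ 0} = Fintype.card ι - 1 by omega)
    with h | h
  · exact .inl (h ▸ hdvd)
  · exact .inr (h ▸ hdvd)

theorem permCongr (hv : IsRegularEigenvectorOf ζ σ v) (e : ι ≃ κ) :
    IsRegularEigenvectorOf ζ (e.permCongr σ) (v ∘ e.symm) where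
  sum_eq_zero := (e.symm.sum_comp v).trans hv.sum_eq_zero
  injective := hv.injective.comp e.symm.injective
  apply_inv k := by simpa [Equiv.Perm.inv_def, Equiv.permCongr_def] using hv.apply_inv (e.symm k)

theorem optionCongr (hv : IsRegularEigenvectorOf ζ σ v) (h0 : ∀ i, v i ≠ 0) :
    IsRegularEigenvectorOf ζ σ.optionCongr (fun o => o.elim 0 v) where
  sum_eq_zero := by simp [Fintype.sum_option, hv.sum_eq_zero]
  injective := by
    rintro (_ | i) (_ | j) h
    · rfl
    · exact absurd h.symm (h0 j)
    · exact absurd h (h0 i)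
    · exact congrArg some (hv.injective h)
  apply_inv := by
    rintro (_ | i)
    · simp [Equiv.Perm.inv_def, ← Equiv.optionCongr_symm]
    · simpa [Equiv.Perm.inv_def, ← Equiv.optionCongr_symm] using hv.apply_inv i

theorem exists_fin (hv : IsRegularEigenvectorOf ζ σ v) {n : ℕ} (hn : Fintype.card ι = n) :
    ∃ (τ : Equiv.Perm (Fin n)) (w : Fin n → ℂ), IsRegularEigenvectorOf ζ τ w :=
  ⟨_, _, hv.permCongr (Fintype.equivFinOfCardEq hn)⟩

end IsRegularEigenvectorOf

theorem Fin.pow_val_add {M : Type*} [Monoid M] {ζ : M} {d : ℕ} (h : ζ ^ d = 1) (a b : Fin d) :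
    ζ ^ ((a + b : Fin d) : ℕ) = ζ ^ (a : ℕ) * ζ ^ (b : ℕ) := by
  rw [Fin.val_add, ← pow_eq_pow_mod _ h, pow_add]

noncomputable def gridVector (ζ : ℂ) (d m : ℕ) (p : Fin d × Fin m) : ℂ :=
  ζ ^ (p.1 : ℕ) * ((p.2 : ℕ) + 1 : ℕ)

section gridVector

variable {ζ : ℂ} {d : ℕ} (m : ℕ)

theorem gridVector_sum_eq_zero (hζ : IsPrimitiveRoot ζ d) (hd : 1 < d) :
    ∑ p, gridVector ζ d m p = 0 := by
  rw [Fintype.sum_prod_type]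
  simp only [gridVector, ← mul_sum, ← sum_mul]
  rw [Fin.sum_univ_eq_sum_range (ζ ^ ·), hζ.geom_sum_eq_zero hd, zero_mul]

theorem gridVector_injective [NeZero d] (hζ : IsPrimitiveRoot ζ d) :
    Injective (gridVector ζ d m) := by
  rintro ⟨s, t⟩ ⟨s', t'⟩ h
  have hnorm := congrArg (‖·‖) h
  simp only [gridVector, norm_mul, norm_pow, hζ.norm'_eq_one (NeZero.ne d), one_pow, one_mul,
    Complex.norm_natCast, Nat.cast_inj, add_left_inj, Fin.val_inj] at hnorm
  subst hnorm
  have hpow := mul_right_cancel₀ (Nat.cast_ne_zero.2 (Nat.succ_ne_zero _)) h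
  rw [Fin.val_inj.1 (hζ.pow_inj s.isLt s'.isLt hpow)]

theorem gridVector_ne_zero (hζ : ζ ≠ 0) (p : Fin d × Fin m) : gridVector ζ d m p ≠ 0 :=
  mul_ne_zero (pow_ne_zero _ hζ) (Nat.cast_ne_zero.2 (Nat.succ_ne_zero _))

theorem isRegularEigenvectorOf_gridVector [NeZero d] (hζ : IsPrimitiveRoot ζ d) (hd : 1 < d) :
    IsRegularEigenvectorOf ζ (Equiv.prodCongr (Equiv.addRight 1) (Equiv.refl (Fin m)))⁻¹
      (gridVector ζ d m) where
  sum_eq_zero := gridVector_sum_eq_zero m hζ hd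
  injective := gridVector_injective m hζ
  apply_inv := by
    rintro ⟨s, t⟩
    simp only [inv_inv, Equiv.prodCongr_apply, Prod.map, Equiv.coe_addRight, Equiv.refl_apply,
      gridVector, Fin.pow_val_add hζ.pow_eq_one, Fin.val_one', Nat.mod_eq_of_lt hd, pow_one]
    ring

end gridVector

theorem exists_isRegularEigenvectorOf_of_dvd {ζ : ℂ} {n d : ℕ} (hζ : IsPrimitiveRoot ζ d)
    (hn : 2 ≤ n) (hd : 1 ≤ d) (hdvd : d ∣ n ∨ d ∣ n - 1) :
    ∃ (σ : Equiv.Perm (Fin n)) (v : Fin n → ℂ), IsRegularEigenvectorOf ζ σ v := by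
  obtain rfl | hd := hd.eq_or_lt
  · obtain rfl : ζ = 1 := IsPrimitiveRoot.one_right_iff.1 hζ
    have : NeZero n := ⟨by omega⟩
    have hω := Complex.isPrimitiveRoot_exp n (NeZero.ne n)
    have hv : IsRegularEigenvectorOf 1 1 (gridVector _ n 1) :=
      ⟨gridVector_sum_eq_zero 1 hω hn, gridVector_injective 1 hω, fun _ => by simp⟩
    exact hv.exists_fin (by simp)
  have : NeZero d := ⟨by omega⟩
  rcases hdvd with ⟨m, rfl⟩ | ⟨m, hm⟩
  · exact (isRegularEigenvectorOf_gridVector m hζ hd).exists_fin (by simp)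
  · have hv := (isRegularEigenvectorOf_gridVector m hζ hd).optionCongr
      (gridVector_ne_zero m (hζ.ne_zero (NeZero.ne d)))
    exact hv.exists_fin (by
      simp only [Fintype.card_option, Fintype.card_prod, Fintype.card_fin]
      omega)

/-- `d` is a regular number for `S_n` (in its reflection representation) iff `d ∣ n` or
`d ∣ n − 1`. -/
theorem regular_number_symmetricGroup_iff (n d : ℕ) (hn : 2 ≤ n) (hd : 1 ≤ d) :
    (∃ (σ : Equiv.Perm (Fin n)) (v : Fin n → ℂ), IsRegularEigenvector n d σ v) ↔
      (d ∣ n ∨ d ∣ (n - 1)) := by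
  have : NeZero d := ⟨by omega⟩
  have hζ := Complex.isPrimitiveRoot_exp d (NeZero.ne d)
  simp only [isRegularEigenvector_iff]
  refine ⟨fun ⟨σ, v, hv⟩ => ?_, exists_isRegularEigenvectorOf_of_dvd hζ hn hd⟩
  simpa using hv.dvd_card_or_dvd_card_sub_one hζ
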